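/- arXiv:2009.01482 — 4 statements merged into one kernel-verified Lean document; each statement's English description precedes it below -/
import Mathlib

section
/- Let T : X → X be a continuous map of a compact metric space and f : X → ℝ continuous, with I^{(0,…,k)}_{T,f} a trajectory-embedding. Then the topological entropy of T equals the topological entropy of the shift map σ restricted to the closure-free image I_{T,f}(X) of the infinite delay observation map (which is a compact invariant subset of ℝ^ℕ). -/
/-!
The delay map `φ x = (f (T^[i] x))ᵢ` semiconjugates `T` to the shift, so the entropy of the shift
on `φ '' X` is the entropy of `T` for the uniform structure pulled back by `φ`, which is coarser
than that of `X`; this gives one inequality. Conversely, `T^[k]` factors through `φ`, and by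
compactness it is uniformly continuous from the pulled-back structure to `X`. Hence two orbits
that stay `φ`-close for `n` steps are close in `X` from time `k` on, and a `(U, n)`-cover of `X` is
obtained by combining a `φ`-cover at time `n` with a fixed `(U, k)`-cover. That costs only a
constant factor, which does not change the exponential growth rate.
-/

open Dynamics Set Function Topology Uniformity
open scoped Finset SetRel

lemma CompactSpace.uniformContinuous_comap_of_factorsThrough {X Y Z : Type*} [TopologicalSpace X]
    [CompactSpace X] [UniformSpace Y] [T2Space Y] [UniformSpace Z] {g : X → Y} {p : X → Z}
    (hg : Continuous g) (hp : Continuous p) (hpg : p.FactorsThrough g) :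
    UniformContinuous[UniformSpace.comap g ‹_›, ‹_›] p := by
  have hquot : IsQuotientMap (rangeFactorization g) :=
    isStrictMap_iff_isQuotientMap_rangeFactorization.1 (hg.isClosedMap.isStrictMap hg)
  let q : range g → Z := p ∘ rangeSplitting g
  have hqp : q ∘ rangeFactorization g = p := funext fun x => hpg (apply_rangeSplitting g _)
  have : CompactSpace (range g) := isCompact_iff_compactSpace.1 (isCompact_range hg)
  have hq : UniformContinuous q :=
    CompactSpace.uniformContinuous_of_continuous (hquot.continuous_iff.2 (hqp ▸ hp))
  let := UniformSpace.comap g ‹_›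
  rw [← hqp]
  exact hq.comp (uniformContinuous_comap.subtype_mk mem_range_self)

lemma SetRel.IsCover.exists_card_le_mul_inter_comp {X : Type*} {A B : SetRel X X} [A.IsSymm]
    [B.IsSymm] {s : Set X} {M N : Finset X} (hM : IsCover A s M) (hN : IsCover B s N) :
    ∃ P : Finset X, #P ≤ #M * #N ∧ IsCover ((A ○ A) ∩ (B ○ B)) s P := by
  classical
  let pick (c d : X) : X := if h : ∃ e, e ~[A] c ∧ e ~[B] d then h.choose else c
  refine ⟨(M ×ˢ N).image fun cd => pick cd.1 cd.2,
    Finset.card_image_le.trans (Finset.card_product M N).le, fun x hx => ?_⟩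
  obtain ⟨c, hc, hxc⟩ := hM hx
  obtain ⟨d, hd, hxd⟩ := hN hx
  have hex : ∃ e, e ~[A] c ∧ e ~[B] d := ⟨x, hxc, hxd⟩
  obtain ⟨hec, hed⟩ : pick c d ~[A] c ∧ pick c d ~[B] d := by
    simp only [pick, dif_pos hex]
    exact hex.choose_spec
  have hcd : (c, d) ∈ M ×ˢ N := Finset.mem_product.2 ⟨hc, hd⟩
  exact ⟨pick c d, Finset.mem_coe.2 (Finset.mem_image_of_mem _ hcd),
    prodMk_mem_comp hxc (A.symm hec), prodMk_mem_comp hxd (B.symm hed)⟩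

namespace Dynamics

variable {X : Type*} {T : X → X} {F : Set X} {U V W : SetRel X X} {k : ℕ}

lemma dynEntourage_inter_dynEntourage_subset (hVU : V ⊆ Prod.map T^[k] T^[k] ⁻¹' U)
    (hWU : W ⊆ U) (n : ℕ) :
    dynEntourage T V n ∩ dynEntourage T W k ⊆ dynEntourage T U n := by
  rintro ⟨x, y⟩ ⟨hV, hW⟩
  rw [mem_dynEntourage] at hV hW ⊢
  intro i hi
  by_cases hik : i < k
  · exact hWU (hW i hik)
  · have := hVU (hV (i - k) (by omega))
    rwa [Set.mem_preimage, Prod.map_apply, ← iterate_add_apply, ← iterate_add_apply,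
      Nat.add_sub_cancel' (not_lt.1 hik)] at this

lemma coverMincard_le_card_mul [V.IsSymm] [W.IsSymm]
    (hVU : V ○ V ⊆ Prod.map T^[k] T^[k] ⁻¹' U) (hWU : W ○ W ⊆ U) {t : Finset X}
    (ht : IsDynCoverOf T F W k t) (n : ℕ) :
    coverMincard T F U n ≤ #t * coverMincard T F V n := by
  rcases eq_top_or_lt_top (coverMincard T F V n) with hV | hV
  · rcases F.eq_empty_or_nonempty with rfl | hF
    · simp [coverMincard_empty]
    · have ht₀ : (#t : ℕ∞) ≠ 0 := by
        exact_mod_cast (Finset.coe_nonempty.1 (ht.nonempty hF)).card_ne_zero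
      rw [hV, ENat.mul_top ht₀]
      exact le_top
  obtain ⟨s, hs, hs_card⟩ := (coverMincard_finite_iff T F V n).1 hV
  obtain ⟨P, hP_card, hP⟩ := SetRel.IsCover.exists_card_le_mul_inter_comp hs ht
  have hPU : IsDynCoverOf T F U n P := hP.mono_entourage <| .trans
    (inter_subset_inter (dynEntourage_comp_subset T V V n) (dynEntourage_comp_subset T W W k))
    (dynEntourage_inter_dynEntourage_subset hVU hWU n)
  calc coverMincard T F U n ≤ #P := hPU.coverMincard_le_card
    _ ≤ #t * #s := by exact_mod_cast hP_card.trans (mul_comm _ _).le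
    _ = #t * coverMincard T F V n := by rw [hs_card]

theorem coverEntropy_le_coverEntropy_image_of_uniformContinuous_iterate {Y : Type*}
    [UniformSpace X] [UniformSpace Y] {S : Y → Y} {φ : X → Y} (h : Semiconj φ T S)
    (hF : IsCompact F) (hTF : MapsTo T F F)
    (hk : UniformContinuous[UniformSpace.comap φ ‹UniformSpace Y›, ‹UniformSpace X›] T^[k]) :
    coverEntropy T F ≤ coverEntropy S (φ '' F) := by
  rw [coverEntropy_image_of_comap _ h]
  refine iSup₂_le fun U hU => ?_
  obtain ⟨W, hW, hWsymm, hWU⟩ := comp_symm_mem_uniformity_sets hU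
  obtain ⟨t, ht⟩ := exists_isDynCoverOf_of_isCompact_invariant hF hTF hW k
  obtain ⟨V, hV, hVsymm, hVU⟩ :=
    @comp_symm_mem_uniformity_sets X (.comap φ ‹UniformSpace Y›) _ (hk hU)
  have hVφ := @coverEntropyEntourage_le_coverEntropy X V (.comap φ ‹UniformSpace Y›) T F hV
  refine le_trans ?_ hVφ
  refine ExpGrowth.expGrowthSup_le_of_eventually_le (b := #t) (ENNReal.natCast_ne_top _)
    (.of_forall fun n => ?_)
  have := ENat.toENNReal_mono (coverMincard_le_card_mul hVU hWU ht n)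
  rwa [ENat.toENNReal_mul, ENat.toENNReal_coe] at this

end Dynamics

theorem entropy_preserved_by_delay_observation {X : Type*} [MetricSpace X] [CompactSpace X]
    (T : X → X) (hT : Continuous T) (f : X → ℝ) (hf : Continuous f) (k : ℕ)
    (h : ∀ x y : X, (∀ j ≤ k, f (T^[j] x) = f (T^[j] y)) → T^[k] x = T^[k] y) :
    coverEntropy T (Set.univ : Set X)
      = coverEntropy (fun s : ℕ → ℝ => fun i : ℕ => s (i + 1))
          (Set.range fun x : X => fun i : ℕ => f (T^[i] x)) := by
  let φ : X → ℕ → ℝ := fun x i => f (T^[i] x)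
  have hφ : Continuous φ := continuous_pi fun i => hf.comp (hT.iterate i)
  have hsemiconj : Semiconj φ T (fun s i => s (i + 1)) := fun x =>
    funext fun i => by simp only [φ, iterate_succ_apply]
  have hcollapse : T^[k].FactorsThrough φ := fun x y hxy => h x y fun j _ => congr_fun hxy j
  rw [← image_univ]
  exact le_antisymm
    (coverEntropy_le_coverEntropy_image_of_uniformContinuous_iterate hsemiconj isCompact_univ
      (mapsTo_univ T univ)
      (CompactSpace.uniformContinuous_comap_of_factorsThrough hφ (hT.iterate k) hcollapse))
    (coverEntropy_image_le_of_uniformContinuous hsemiconj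
      (CompactSpace.uniformContinuous_of_continuous hφ) univ)
end

section
/- A continuous map T : X → X of a compact metric space with dim X finite is doubly 0-dimensional whenever it is a piecewise embedding. That is, if X = ⋃_{i∈ℕ} F_i with each F_i closed and T|F_i injective, then for every closed subset A ⊂ X with dim A ≤ 0, both dim T⁻¹(A) ≤ 0 and dim T(A) ≤ 0. -/
open Set

/-- A compact, preconnected metric space covered by countably many closed
totally disconnected sets is a subsingleton. -/
lemma key {Y : Type*} [MetricSpace Y] [CompactSpace Y] [PreconnectedSpace Y]
    (E : ℕ → Set Y) (hE : ∀ i, IsClosed (E i)) (hEt : ∀ i, IsTotallyDisconnected (E i))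
    (hcov : (⋃ i, E i) = Set.univ) : ∀ x y : Y, x = y := by
  intro x y
  by_contra hxy
  have hne : Nonempty Y := ⟨x⟩
  obtain ⟨i, hi⟩ := nonempty_interior_of_iUnion_of_closed hE hcov
  obtain ⟨a, ha⟩ := hi
  -- work in the subtype E i
  haveI : TotallyDisconnectedSpace (E i) := totallyDisconnectedSpace_subtype_iff.2 (hEt i)
  haveI : CompactSpace (E i) := isCompact_iff_compactSpace.1 (hE i).isCompact
  have haE : a ∈ E i := interior_subset ha
  -- an open set in Y inside E i, around a, avoiding one of x,y
  have hxyd : (0:ℝ) < dist x y := dist_pos.2 hxy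
  -- choose z among x y with z ≠ a
  obtain ⟨z, hz⟩ : ∃ z : Y, z ≠ a := by
    rcases eq_or_ne x a with rfl | h
    · exact ⟨y, fun h => hxy h.symm⟩
    · exact ⟨x, h⟩
  set U : Set Y := interior (E i) ∩ Metric.ball a (dist z a) with hU
  have hUopen : IsOpen U := isOpen_interior.inter Metric.isOpen_ball
  have haU : a ∈ U := ⟨ha, by simpa using dist_pos.2 hz⟩
  have hUE : U ⊆ E i := fun w hw => interior_subset hw.1
  have hzU : z ∉ U := fun h => absurd (Metric.mem_ball.mp h.2) (lt_irrefl _)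
  -- preimage of U in the subtype is open and contains ⟨a, haE⟩
  obtain ⟨V, hVclopen, haV, hVsub⟩ :=
    compact_exists_isClopen_in_isOpen (continuous_subtype_val.isOpen_preimage U hUopen)
      (show (⟨a, haE⟩ : E i) ∈ Subtype.val ⁻¹' U from haU)
  set V' : Set Y := Subtype.val '' V with hV'
  have hV'U : V' ⊆ U := by rintro _ ⟨w, hw, rfl⟩; exact hVsub hw
  have hV'closed : IsClosed V' := by
    have : IsCompact V' := (hVclopen.1.isCompact).image continuous_subtype_val
    exact this.isClosed
  have hV'open : IsOpen V' := by
    obtain ⟨W, hWopen, hWeq⟩ := isOpen_induced_iff.1 hVclopen.2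
    have heq : V' = W ∩ U := by
      apply Subset.antisymm
      · rintro _ ⟨w, hw, rfl⟩
        have hwW : w ∈ Subtype.val ⁻¹' W := hWeq ▸ hw
        exact ⟨hwW, hVsub hw⟩
      · rintro w ⟨hwW, hwU⟩
        refine ⟨⟨w, hUE hwU⟩, ?_, rfl⟩
        rw [← hWeq]; exact hwW
    rw [heq]; exact hWopen.inter hUopen
  have hVuniv : V' = univ := by
    rcases (isClopen_iff.mp ⟨hV'closed, hV'open⟩) with h | h
    · have : a ∈ V' := ⟨⟨a, haE⟩, haV, rfl⟩
      rw [h] at this; exact absurd this (Set.notMem_empty a)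
    · exact h
  exact hzU (hV'U (hVuniv ▸ mem_univ z))

lemma IsTotallyDisconnected.mono {X : Type*} [TopologicalSpace X] {s t : Set X}
    (h : t ⊆ s) (hs : IsTotallyDisconnected s) : IsTotallyDisconnected t :=
  fun u hu hp => hs u (hu.trans h) hp

/-- Set version: a compact preconnected set covered by countably many closed
totally disconnected sets is a subsingleton. -/
lemma key2 {X : Type*} [MetricSpace X] (C : Set X) (hCc : IsCompact C)
    (hCp : IsPreconnected C) (D : ℕ → Set X) (hD : ∀ i, IsClosed (D i))
    (hDt : ∀ i, IsTotallyDisconnected (D i)) (hcov : C ⊆ ⋃ i, D i) :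
    C.Subsingleton := by
  haveI : CompactSpace C := isCompact_iff_compactSpace.1 hCc
  haveI : PreconnectedSpace C := Subtype.preconnectedSpace hCp
  intro x hx y hy
  have := key (Y := C) (fun i => Subtype.val ⁻¹' (D i))
    (fun i => (hD i).preimage continuous_subtype_val)
    (fun i => Topology.IsEmbedding.subtypeVal.isTotallyDisconnected
      ((hDt i).mono (Set.image_preimage_subset _ _)))
    (by
      ext w
      simp only [Set.mem_iUnion, Set.mem_univ, iff_true, Set.mem_preimage]
      simpa using hcov w.2)
    ⟨x, hx⟩ ⟨y, hy⟩
  exact Subtype.ext_iff.1 this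

theorem piecewise_embedding_doubly_zero_dimensional {X : Type*} [MetricSpace X]
    [CompactSpace X] (T : X → X) (hT : Continuous T)
    (F : ℕ → Set X) (hFc : ∀ i, IsClosed (F i)) (hcov : (⋃ i, F i) = Set.univ)
    (hinj : ∀ i, Set.InjOn T (F i)) :
    ∀ A : Set X, IsClosed A → IsTotallyDisconnected A →
      IsTotallyDisconnected (T ⁻¹' A) ∧ IsTotallyDisconnected (T '' A) := by
  intro A hA htA
  constructor
  · -- preimage
    intro t ht hp
    intro x hx y hy
    -- T '' t is preconnected subset of A, hence a subsingleton
    have himg : (T '' t).Subsingleton :=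
      htA _ (by rintro _ ⟨w, hw, rfl⟩; exact ht hw) (hp.image T hT.continuousOn)
    have htfib : t ⊆ T ⁻¹' {T x} := by
      intro w hw
      exact himg (Set.mem_image_of_mem T hw) (Set.mem_image_of_mem T hx)
    have hfibc : IsClosed (T ⁻¹' {T x} : Set X) := isClosed_singleton.preimage hT
    have hsub : (closure t).Subsingleton := by
      refine key2 (closure t) isClosed_closure.isCompact hp.closure
        (fun i => T ⁻¹' {T x} ∩ F i)
        (fun i => hfibc.inter (hFc i))
        (fun i => ?_) ?_
      · -- each piece has at most one point
        have : (T ⁻¹' {T x} ∩ F i).Subsingleton := by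
          intro u hu v hv
          exact hinj i hu.2 hv.2 (by rw [hu.1, hv.1])
        exact fun u hu hp => this.anti hu
      · intro w hw
        have hwf : w ∈ T ⁻¹' {T x} := hfibc.closure_subset_iff.2 htfib hw
        have : w ∈ ⋃ i, F i := hcov ▸ Set.mem_univ w
        obtain ⟨i, hi⟩ := Set.mem_iUnion.1 this
        exact Set.mem_iUnion.2 ⟨i, hwf, hi⟩
    exact hsub (subset_closure hx) (subset_closure hy)
  · -- image
    intro t ht hp
    have hAc : IsCompact A := hA.isCompact
    have hTAc : IsCompact (T '' A) := hAc.image hT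
    have hDt : ∀ i, IsTotallyDisconnected (T '' (A ∩ F i)) := by
      intro i
      haveI : CompactSpace ↥(A ∩ F i) :=
        isCompact_iff_compactSpace.1 (hA.inter (hFc i)).isCompact
      have hinj' : Function.Injective (T ∘ (Subtype.val : ↥(A ∩ F i) → X)) := by
        intro u v huv
        exact Subtype.ext (hinj i u.2.2 v.2.2 huv)
      have hemb := (hT.comp continuous_subtype_val).isClosedEmbedding hinj'
      have h2 : IsTotallyDisconnected (Set.range (T ∘ (Subtype.val : ↥(A ∩ F i) → X))) := by
        rw [hemb.isEmbedding.isTotallyDisconnected_range]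
        exact totallyDisconnectedSpace_subtype_iff.2 (htA.mono Set.inter_subset_left)
      have hr : Set.range (T ∘ (Subtype.val : ↥(A ∩ F i) → X)) = T '' (A ∩ F i) := by
        rw [Set.range_comp, Subtype.range_val]
      rwa [hr] at h2
    have hsub : (closure t).Subsingleton := by
      refine key2 (closure t) isClosed_closure.isCompact hp.closure
        (fun i => T '' (A ∩ F i))
        (fun i => ((hAc.inter_right (hFc i)).image hT).isClosed)
        hDt ?_
      have hct : closure t ⊆ T '' A := hTAc.isClosed.closure_subset_iff.2 ht
      intro w hw
      obtain ⟨u, hu, rfl⟩ := hct hw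
      have : u ∈ ⋃ i, F i := hcov ▸ Set.mem_univ u
      obtain ⟨i, hi⟩ := Set.mem_iUnion.1 this
      exact Set.mem_iUnion.2 ⟨i, u, ⟨hu, hi⟩, rfl⟩
    exact fun x hx y hy => hsub (subset_closure hx) (subset_closure hy)
end

section
/- For a compact metric space X and α > 0 and a finite set S ⊂ ℕ, the set E(α,S) of pairs (T,f) ∈ C(X,X) × C(X,ℝ) such that I^S_{T,f}(x) ≠ I^S_{T,f}(y) whenever d(T^j(x), T^j(y)) ≥ α for all j ∈ S, is open in C(X,X) × C(X,ℝ) with the uniform metrics. -/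
/-!
The pairs `(x, y)` witnessing that `(T, f)` fails the condition form a closed subset of the
compact space `X × X`, depending continuously on `(T, f)` because evaluation of iterates is
jointly continuous. Projecting out the compact factor `X × X` keeps the set of failing `(T, f)`
closed, so its complement is open.
-/

open Set

theorem ContinuousMap.continuous_iterate_eval {X : Type*} [TopologicalSpace X]
    [LocallyCompactPair X X] (n : ℕ) :
    Continuous fun q : C(X, X) × X => (q.1 : X → X)^[n] q.2 := by
  induction n with
  | zero => simpa using continuous_snd
  | succ n ih =>
    simp only [Function.iterate_succ_apply']
    exact continuous_eval.comp (continuous_fst.prodMk ih)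

theorem isOpen_setOf_forall_imp_of_compactSpace {A B : Type*} [TopologicalSpace A]
    [TopologicalSpace B] [CompactSpace B] {K U : Set (A × B)} (hK : IsClosed K)
    (hU : IsOpen U) : IsOpen {a | ∀ b, (a, b) ∈ K → (a, b) ∈ U} := by
  have hbad : IsClosed (Prod.fst '' (K \ U)) :=
    isClosedMap_fst_of_compactSpace _ (hK.sdiff hU)
  convert hbad.isOpen_compl using 1
  ext a
  simp

theorem alpha_trajectory_embedding_pairs_open_general {X : Type*} [MetricSpace X] [CompactSpace X]
    (α : ℝ) (S : Finset ℕ) :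
    IsOpen {p : C(X, X) × C(X, ℝ) |
      ∀ x y : X, (∀ j ∈ S, α ≤ dist ((p.1 : X → X)^[j] x) ((p.1 : X → X)^[j] y)) →
        ∃ j ∈ S, p.2 ((p.1 : X → X)^[j] x) ≠ p.2 ((p.1 : X → X)^[j] y)} := by
  have orbit_fst (j : ℕ) : Continuous fun q : (C(X, X) × C(X, ℝ)) × (X × X) =>
      (q.1.1 : X → X)^[j] q.2.1 :=
    (ContinuousMap.continuous_iterate_eval j).comp (continuous_fst.fst.prodMk continuous_snd.fst)
  have orbit_snd (j : ℕ) : Continuous fun q : (C(X, X) × C(X, ℝ)) × (X × X) =>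
      (q.1.1 : X → X)^[j] q.2.2 :=
    (ContinuousMap.continuous_iterate_eval j).comp (continuous_fst.fst.prodMk continuous_snd.snd)
  have separated : IsClosed {q : (C(X, X) × C(X, ℝ)) × (X × X) |
      ∀ j ∈ S, α ≤ dist ((q.1.1 : X → X)^[j] q.2.1) ((q.1.1 : X → X)^[j] q.2.2)} := by
    simp only [ofPred_forall]
    exact isClosed_biInter fun j _ =>
      isClosed_le continuous_const ((orbit_fst j).dist (orbit_snd j))
  have distinguished : IsOpen {q : (C(X, X) × C(X, ℝ)) × (X × X) |
      ∃ j ∈ S,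
        q.1.2 ((q.1.1 : X → X)^[j] q.2.1) ≠ q.1.2 ((q.1.1 : X → X)^[j] q.2.2)} := by
    simp only [← exists_prop, ofPred_exists]
    exact isOpen_biUnion fun j _ => isOpen_ne_fun
      (continuous_eval.comp (continuous_fst.snd.prodMk (orbit_fst j)))
      (continuous_eval.comp (continuous_fst.snd.prodMk (orbit_snd j)))
  simpa only [Prod.forall, mem_ofPred_eq] using
    isOpen_setOf_forall_imp_of_compactSpace separated distinguished

theorem alpha_trajectory_embedding_pairs_open {X : Type*} [MetricSpace X] [CompactSpace X]
    (α : ℝ) (hα : 0 < α) (S : Finset ℕ) :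
    IsOpen {p : C(X, X) × C(X, ℝ) |
      ∀ x y : X, (∀ j ∈ S, α ≤ dist ((p.1 : X → X)^[j] x) ((p.1 : X → X)^[j] y)) →
        ∃ j ∈ S, p.2 ((p.1 : X → X)^[j] x) ≠ p.2 ((p.1 : X → X)^[j] y)} :=
  alpha_trajectory_embedding_pairs_open_general α S
end

section
/- The set-valued map T ↦ CR(T) from C(X,X) (with the uniform metric) to closed subsets of a compact metric space X is upper semi-continuous: for every T and every open set V ⊇ CR(T), there is δ > 0 such that d(T,T') < δ implies CR(T') ⊆ V. -/
def chainRecurrentSet {X : Type*} [MetricSpace X] (T : X → X) : Set X :=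
  {x : X | ∀ ε > (0 : ℝ), ∃ m : ℕ, 1 ≤ m ∧ ∃ c : ℕ → X, c 0 = x ∧ c m = x ∧
    ∀ i < m, dist (T (c i)) (c (i + 1)) < ε}

theorem chain_recurrent_upper_semicontinuous {X : Type*} [MetricSpace X] [CompactSpace X]
    (T : C(X, X)) (V : Set X) (hV : IsOpen V) (hCR : chainRecurrentSet (T : X → X) ⊆ V) :
    ∃ δ > (0 : ℝ), ∀ T' : C(X, X), dist T T' < δ → chainRecurrentSet (T' : X → X) ⊆ V := by
  by_contra h
  push_neg at h
  simp only [Set.not_subset] at h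
  choose Tn hTd xn hxn hxV using fun n : ℕ => h (1 / (n + 1)) (by positivity)
  have hK : IsCompact (Vᶜ) := hV.isClosed_compl.isCompact
  obtain ⟨x₀, hx₀K, φ, hφ, hconv⟩ := hK.tendsto_subseq (fun n => hxV n)
  have hx₀ : x₀ ∈ chainRecurrentSet (T : X → X) := by
    intro ε hε
    set ε₀ := ε / 4 with hε₀def
    have hε₀ : 0 < ε₀ := by positivity
    -- uniform continuity of T
    have hUC : UniformContinuous (T : X → X) :=
      CompactSpace.uniformContinuous_of_continuous T.continuous
    rw [Metric.uniformContinuous_iff] at hUC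
    obtain ⟨η, hη, hηT⟩ := hUC ε₀ hε₀
    -- pick k large
    obtain ⟨N, hN⟩ := Metric.tendsto_atTop.mp hconv (min η ε₀) (lt_min hη hε₀)
    obtain ⟨M, hM⟩ := exists_nat_one_div_lt hε₀
    set k := max N M with hkdef
    set n := φ k with hndef
    have hdistx : dist (xn n) x₀ < min η ε₀ := hN k (le_max_left _ _)
    have hnM : (M : ℝ) + 1 ≤ (n : ℝ) + 1 := by
      have : M ≤ n := le_trans (le_max_right N M) (le_trans (le_refl k) hφ.le_apply)
      exact_mod_cast Nat.succ_le_succ this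
    have hsmall : (1 : ℝ) / (n + 1) < ε₀ :=
      lt_of_le_of_lt (one_div_le_one_div_of_le (by positivity) hnM) hM
    have hTT' : dist T (Tn n) < ε₀ := lt_trans (hTd n) hsmall
    -- pointwise bound
    have hpt : ∀ z : X, dist (T z) (Tn n z) < ε₀ := fun z =>
      lt_of_le_of_lt (ContinuousMap.dist_apply_le_dist z) hTT'
    -- ε₀-chain for Tn n from xn n
    obtain ⟨m, hm, c, hc0, hcm, hchain⟩ := hxn n ε₀ hε₀
    -- chain for T with 2ε₀
    have hchainT : ∀ i < m, dist (T (c i)) (c (i + 1)) < 2 * ε₀ := by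
      intro i hi
      calc dist (T (c i)) (c (i + 1))
          ≤ dist (T (c i)) (Tn n (c i)) + dist (Tn n (c i)) (c (i + 1)) :=
            dist_triangle _ _ _
        _ < ε₀ + ε₀ := add_lt_add (hpt _) (hchain i hi)
        _ = 2 * ε₀ := by ring
    have hdη : dist (xn n) x₀ < η := lt_of_lt_of_le hdistx (min_le_left _ _)
    have hdε : dist (xn n) x₀ < ε₀ := lt_of_lt_of_le hdistx (min_le_right _ _)
    have hTx : dist (T x₀) (T (xn n)) < ε₀ := hηT (by rw [dist_comm]; exact hdη)
    refine ⟨m, hm, fun i => if i = 0 ∨ i = m then x₀ else c i, by simp, by simp, ?_⟩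
    intro i hi
    show dist (T (if i = 0 ∨ i = m then x₀ else c i))
      (if i + 1 = 0 ∨ i + 1 = m then x₀ else c (i + 1)) < ε
    rcases eq_or_ne i 0 with rfl | hi0
    · rcases eq_or_ne 1 m with hm1 | hm1
      · -- m = 1 : check dist (T x₀) x₀ < ε
        rw [if_pos (Or.inl rfl), if_pos (Or.inr hm1)]
        have hcm1 : c 1 = xn n := by rw [← hm1] at hcm; exact hcm
        calc dist (T x₀) x₀
            ≤ dist (T x₀) (T (xn n)) + dist (T (xn n)) (c 1) + dist (c 1) x₀ :=
              dist_triangle4 _ _ _ _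
          _ < ε₀ + 2 * ε₀ + ε₀ := by
              refine add_lt_add (add_lt_add hTx ?_) ?_
              · have := hchainT 0 (by omega)
                rwa [hc0] at this
              · rwa [hcm1]
          _ = ε := by rw [hε₀def]; ring
      · -- m > 1
        have h0 : (if (0 : ℕ) = 0 ∨ 0 = m then x₀ else c 0) = x₀ := by simp
        have h1 : (if (1 : ℕ) = 0 ∨ 1 = m then x₀ else c 1) = c 1 := by
          rw [if_neg]; push_neg; exact ⟨one_ne_zero, hm1⟩
        simp only [h0, h1]
        calc dist (T x₀) (c 1)
            ≤ dist (T x₀) (T (xn n)) + dist (T (xn n)) (c 1) := dist_triangle _ _ _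
          _ < ε₀ + 2 * ε₀ := by
              refine add_lt_add hTx ?_
              have := hchainT 0 (by omega)
              rwa [hc0] at this
          _ < ε := by rw [hε₀def]; linarith
    · have hi0' : (if i = 0 ∨ i = m then x₀ else c i) = c i := by
        rw [if_neg]; push_neg; exact ⟨hi0, by omega⟩
      rw [hi0']
      rcases eq_or_ne (i + 1) m with him | him
      · have h1 : (if i + 1 = 0 ∨ i + 1 = m then x₀ else c (i + 1)) = x₀ := by
          rw [if_pos (Or.inr him)]
        rw [h1]
        calc dist (T (c i)) x₀
            ≤ dist (T (c i)) (c (i + 1)) + dist (c (i + 1)) x₀ := dist_triangle _ _ _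
          _ < 2 * ε₀ + ε₀ := by
              refine add_lt_add (hchainT i hi) ?_
              rw [him, hcm]; exact hdε
          _ < ε := by rw [hε₀def]; linarith
      · have h1 : (if i + 1 = 0 ∨ i + 1 = m then x₀ else c (i + 1)) = c (i + 1) := by
          rw [if_neg]; push_neg; exact ⟨by omega, him⟩
        rw [h1]
        calc dist (T (c i)) (c (i + 1)) < 2 * ε₀ := hchainT i hi
          _ < ε := by rw [hε₀def]; linarith
  exact hx₀K (hCR hx₀)
end
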